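/- If G is a finite non-abelian group, then the number of 4-tuples (g₁,g₂,g₃,g₄) in G⁴ with g₁g₂g₃g₁⁻¹g₄g₃⁻¹g₂⁻¹g₄⁻¹ = 1 is at most (5/8)·|G|⁴. -/

import Mathlib

/-!
The relation says `a (bc) a⁻¹ = d (bc) d⁻¹`, i.e. that `d⁻¹a` commutes with `bc`, so a solution is
the same as a free choice of `c, d` together with a commuting pair; the count is therefore
`|G|⁴ · commProb G`. For non-abelian `G` the quotient `G/Z(G)` is not cyclic, hence `[G : Z(G)] ≥ 4`,
and every noncentral centralizer has index at least `2`. Summing centralizer orders gives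
`|G|² · commProb G ≤ |Z||G| + (|G| - |Z|)|G|/2 ≤ (5/8)|G|²`.
-/

open Subgroup

theorem isCyclic_of_nat_card_lt_four {H : Type*} [Group H] [Finite H] (hH : Nat.card H < 4) :
    IsCyclic H := by
  have : 0 < Nat.card H := Nat.card_pos
  interval_cases hcard : Nat.card H
  · exact @isCyclic_of_subsingleton _ _ (Nat.card_eq_one_iff_unique.mp hcard).1
  · exact isCyclic_of_prime_card (p := 2) hcard
  · exact isCyclic_of_prime_card (p := 3) hcard

section SurfaceWord

variable {G : Type*} [Group G]

theorem surface_word_eq_one_iff (a b c d : G) :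
    a * b * c * a⁻¹ * d * c⁻¹ * b⁻¹ * d⁻¹ = 1 ↔ Commute (d⁻¹ * a) (b * c) := by
  rw [show a * b * c * a⁻¹ * d * c⁻¹ * b⁻¹ * d⁻¹ =
      d * ((d⁻¹ * a) * (b * c) * (d⁻¹ * a)⁻¹ * (b * c)⁻¹) * d⁻¹ by group,
    conj_eq_one_iff, mul_inv_eq_one, mul_inv_eq_iff_eq_mul]
  rfl

theorem card_surface_word_eq :
    Nat.card { t : G × G × G × G //
        t.1 * t.2.1 * t.2.2.1 * t.1⁻¹ * t.2.2.2 * t.2.2.1⁻¹ * t.2.1⁻¹ * t.2.2.2⁻¹ = 1 } =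
      Nat.card G ^ 2 * Nat.card { p : G × G // Commute p.1 p.2 } := by
  let e : { t : G × G × G × G //
        t.1 * t.2.1 * t.2.2.1 * t.1⁻¹ * t.2.2.2 * t.2.2.1⁻¹ * t.2.1⁻¹ * t.2.2.2⁻¹ = 1 } ≃
      G × G × { p : G × G // Commute p.1 p.2 } :=
    { toFun := fun ⟨(a, b, c, d), h⟩ =>
        (d, c, ⟨(d⁻¹ * a, b * c), (surface_word_eq_one_iff ..).mp h⟩)
      invFun := fun ⟨d, c, ⟨(u, x), h⟩⟩ =>
        ⟨(d * u, x * c⁻¹, c, d), (surface_word_eq_one_iff ..).mpr (by simpa [mul_assoc] using h)⟩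
      left_inv := fun ⟨(a, b, c, d), _⟩ => by ext <;> simp [mul_assoc]
      right_inv := fun ⟨d, c, ⟨(u, x), _⟩⟩ => by ext <;> simp [mul_assoc] }
  rw [Nat.card_congr e, Nat.card_prod, Nat.card_prod, sq, mul_assoc]

end SurfaceWord

section CommProb

variable {G : Type*} [Group G] [Finite G]

theorem Subgroup.four_le_index_center (hG : ¬ IsMulCommutative G) : 4 ≤ (center G).index := by
  by_contra! hlt
  have : IsCyclic (G ⧸ center G) := isCyclic_of_nat_card_lt_four hlt
  exact hG (isMulCommutative_of_isCyclic_quotient_center_self G)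

theorem Subgroup.two_mul_card_le_of_ne_top {H : Subgroup G} (hH : H ≠ ⊤) :
    2 * Nat.card H ≤ Nat.card G := by
  rw [← H.card_mul_index, mul_comm]
  exact Nat.mul_le_mul_left _ (one_lt_index_of_ne_top hH)

theorem two_mul_card_centralizer_le (g : G) [Decidable (g ∈ center G)] :
    2 * Nat.card (centralizer {g}) ≤ Nat.card G + if g ∈ center G then Nat.card G else 0 := by
  split_ifs with hg
  · have := (centralizer {g}).card_le_card_group
    omega
  · refine two_mul_card_le_of_ne_top fun htop => hg ?_
    exact Set.singleton_subset_iff.mp (centralizer_eq_top_iff_subset.mp htop)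

theorem card_commute_eq_sum_card_centralizer [Fintype G] :
    Nat.card { p : G × G // Commute p.1 p.2 } = ∑ g : G, Nat.card (centralizer {g}) := by
  rw [Nat.card_congr (Equiv.subtypeProdEquivSigmaSubtype fun a b : G => Commute a b),
    Nat.card_sigma]
  refine Finset.sum_congr rfl fun g _ => Nat.card_congr (Equiv.subtypeEquivRight fun k => ?_)
  rw [mem_centralizer_singleton_iff]
  exact eq_comm

theorem two_mul_card_commute_le :
    2 * Nat.card { p : G × G // Commute p.1 p.2 } ≤
      Nat.card G ^ 2 + Nat.card (center G) * Nat.card G := by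
  classical
  have := Fintype.ofFinite G
  rw [card_commute_eq_sum_card_centralizer, Finset.mul_sum]
  calc ∑ g : G, 2 * Nat.card (centralizer {g})
      ≤ ∑ g : G, (Nat.card G + if g ∈ center G then Nat.card G else 0) :=
        Finset.sum_le_sum fun g _ => two_mul_card_centralizer_le g
    _ = Nat.card G ^ 2 + Nat.card (center G) * Nat.card G := by
        rw [Finset.sum_add_distrib, Finset.sum_const, ← Finset.sum_filter, Finset.sum_const,
          smul_eq_mul, smul_eq_mul, Finset.card_univ, ← Nat.card_eq_fintype_card, sq,
          Nat.card_eq_fintype_card (α := center G), Fintype.card_subtype]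

theorem commProb_le_five_eighths (hG : ¬ IsMulCommutative G) : commProb G ≤ 5 / 8 := by
  have hpairs := two_mul_card_commute_le (G := G)
  have hcenter : 4 * Nat.card (center G) ≤ Nat.card G := by
    rw [← (center G).card_mul_index, mul_comm]
    exact Nat.mul_le_mul_left _ (four_le_index_center hG)
  have hnat : 8 * Nat.card { p : G × G // Commute p.1 p.2 } ≤ 5 * Nat.card G ^ 2 := by
    nlinarith
  rw [commProb_def, div_le_iff₀ (pow_pos (Nat.cast_pos.mpr Nat.card_pos) 2)]
  have : (8 : ℚ) * Nat.card { p : G × G // Commute p.1 p.2 } ≤ 5 * (Nat.card G : ℚ) ^ 2 := by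
    exact_mod_cast hnat
  linarith

end CommProb

theorem card_surface_word_le_five_eighths (G : Type*) [Group G] [Finite G]
    (h : ¬ ∀ g h : G, g * h = h * g) :
    (Nat.card { t : G × G × G × G //
        t.1 * t.2.1 * t.2.2.1 * t.1⁻¹ * t.2.2.2 * t.2.2.1⁻¹ * t.2.1⁻¹ * t.2.2.2⁻¹ = 1 } : ℚ) ≤
      5 / 8 * (Nat.card G : ℚ) ^ 4 := by
  have hG : ¬ IsMulCommutative G := fun hc => h fun g k => mul_comm' g k
  have hcard : (Nat.card G : ℚ) ≠ 0 := Nat.cast_ne_zero.mpr Nat.card_pos.ne'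
  rw [card_surface_word_eq, Nat.cast_mul, Nat.cast_pow]
  calc (Nat.card G : ℚ) ^ 2 * Nat.card { p : G × G // Commute p.1 p.2 }
      = commProb G * (Nat.card G : ℚ) ^ 4 := by rw [commProb_def]; field_simp
    _ ≤ 5 / 8 * (Nat.card G : ℚ) ^ 4 := by gcongr; exact commProb_le_five_eighths hG
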